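/- Let k ≥ 1 and n ≥ 1. Let w : {1,…,n} → {0,1}^{2k} be such that every w_i has exactly k coordinates equal to 1 (Σ_{a=1}^{2k} w_i(a) = k). Define the bilinear form ⟨x, y⟩ = Σ_{a=1}^{2k} x_a y_a − (Σ_a x_a)(Σ_a y_a)/(2k) on ℝ^{2k}, let ρ ∈ ℝ^{2k} have coordinates ρ_a = (2k − 2a + 1)/2, set Λ = Σ_{i=1}^n w_i, and define F(w) = ⟨Λ, Λ⟩ + 2 ⟨Λ, ρ⟩. Then F(w) ≤ n² k / 2 + n k², and equality holds if and only if every w_i equals the vector (1,…,1,0,…,0) with 1 in the first k coordinates and 0 in the last k coordinates. -/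

import Mathlib

/-- The bilinear form `⟨x, y⟩ = Σ_a x_a y_a − (Σ_a x_a)(Σ_a y_a)/(2k)` on `ℝ^{2k}`,
induced by the Killing form of `su(2k)` in the standard (overcomplete) basis. -/
noncomputable def su2kForm (k : ℕ) (x y : Fin (2 * k) → ℝ) : ℝ :=
  (∑ a, x a * y a) - (∑ a, x a) * (∑ a, y a) / (2 * (k : ℝ))

/-- The Weyl vector of `su(2k)`: `ρ_a = (2k − 2a + 1)/2` for `a = 1, …, 2k`
(in `0`-indexed form, `ρ a = (2k − 2a − 1)/2`). -/
noncomputable def su2kRho (k : ℕ) : Fin (2 * k) → ℝ :=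
  fun a => (2 * (k : ℝ) - 2 * ((a : ℕ) : ℝ) - 1) / 2

/-!
Write `Λ = Σᵢ wᵢ`. Its entries satisfy `0 ≤ Λ_a ≤ n` and `Σ_a Λ_a = nk`, and `Σ_a ρ_a = 0`, so
`F(w) = Σ_a Λ_a² + 2 Σ_a Λ_a ρ_a - n²k/2`. Termwise `Λ_a² ≤ n Λ_a`, which sums to `n²k`; and since
`ρ_a > 0` exactly on the first `k` coordinates, `Σ_a Λ_a ρ_a ≤ n Σ_{a ≤ k} ρ_a = nk²/2`, with
equality only for `Λ = n (1, …, 1, 0, …, 0)`. For `0`–`1` vectors `wᵢ` this forces every `wᵢ` to be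
`(1, …, 1, 0, …, 0)`.
-/

open Finset

lemma sum_range_odd (m : ℕ) : ∑ i ∈ range m, (2 * (i : ℝ) + 1) = (m : ℝ) ^ 2 := by
  induction m with
  | zero => simp
  | succ m ih => rw [sum_range_succ, ih]; push_cast; ring

lemma sum_range_sub_odd (c : ℝ) (m : ℕ) :
    ∑ i ∈ range m, (c - 2 * (i : ℝ) - 1) = m * c - (m : ℝ) ^ 2 := by
  simp only [sub_sub, sum_sub_distrib, sum_const, card_range, nsmul_eq_mul, sum_range_odd]

lemma sum_fin_ite_lt {m k : ℕ} (hkm : k ≤ m) (f : ℕ → ℝ) :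
    ∑ a : Fin m, (if (a : ℕ) < k then f a else 0) = ∑ i ∈ range k, f i := by
  rw [Fin.sum_univ_eq_sum_range (fun i => if i < k then f i else 0), ← sum_filter]
  congr 1
  ext i
  simp only [mem_filter, mem_range]
  omega

lemma sum_sq_le_mul_sum {ι : Type*} [Fintype ι] {f : ι → ℝ} {s : ℝ}
    (hf : ∀ i, 0 ≤ f i ∧ f i ≤ s) : ∑ i, f i ^ 2 ≤ s * ∑ i, f i := by
  rw [mul_sum]
  exact sum_le_sum fun i _ => by rw [sq]; exact mul_le_mul_of_nonneg_right (hf i).2 (hf i).1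

lemma zero_le_and_le_one_of_zero_or_one {x : ℝ} (hx : x = 0 ∨ x = 1) : 0 ≤ x ∧ x ≤ 1 := by
  rcases hx with rfl | rfl <;> norm_num

section ZeroOneSums

variable {ι : Type*} [Fintype ι]

lemma sum_nonneg_and_le_card_of_zero_or_one {f : ι → ℝ} (hf : ∀ i, f i = 0 ∨ f i = 1) :
    0 ≤ ∑ i, f i ∧ ∑ i, f i ≤ Fintype.card ι := by
  have h01 := fun i => zero_le_and_le_one_of_zero_or_one (hf i)
  refine ⟨sum_nonneg fun i _ => (h01 i).1, ?_⟩
  simpa using sum_le_sum fun i (_ : i ∈ univ) => (h01 i).2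

lemma sum_eq_card_mul_iff_of_zero_or_one {f : ι → ℝ} {b : ℝ}
    (hf : ∀ i, f i = 0 ∨ f i = 1) (hb : b = 0 ∨ b = 1) :
    ∑ i, f i = Fintype.card ι * b ↔ ∀ i, f i = b := by
  refine ⟨fun h => ?_, fun h => by simp [h]⟩
  have h01 := fun i => zero_le_and_le_one_of_zero_or_one (hf i)
  rcases hb with rfl | rfl
  · rw [mul_zero, sum_eq_zero_iff_of_nonneg fun i _ => (h01 i).1] at h
    exact fun i => h i (mem_univ i)
  · have hcard : (Fintype.card ι : ℝ) = ∑ _i : ι, (1 : ℝ) := by simp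
    rw [mul_one, hcard, sum_eq_sum_iff_of_le fun i _ => (h01 i).2] at h
    exact fun i => h i (mem_univ i)

lemma sum_apply_eq_card_smul_iff_of_zero_or_one {κ : Type*} {w : ι → κ → ℝ} {v : κ → ℝ}
    (hw : ∀ i a, w i a = 0 ∨ w i a = 1) (hv : ∀ a, v a = 0 ∨ v a = 1) :
    (fun a => ∑ i, w i a) = (Fintype.card ι : ℝ) • v ↔ ∀ i a, w i a = v a := by
  rw [funext_iff, forall_comm]
  exact forall_congr' fun a => sum_eq_card_mul_iff_of_zero_or_one (hw · a) (hv a)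

end ZeroOneSums

section su2k

variable {k : ℕ}

noncomputable def firstHalfIndicator (k : ℕ) : Fin (2 * k) → ℝ :=
  fun a => if (a : ℕ) < k then 1 else 0

/-- `⟨Λ, Λ + 2ρ⟩`, the eigenvalue of the quadratic Casimir on the irreducible representation of
highest weight `Λ`. -/
noncomputable def su2kCasimir (k : ℕ) (L : Fin (2 * k) → ℝ) : ℝ :=
  su2kForm k L L + 2 * su2kForm k L (su2kRho k)

lemma sum_su2kRho : ∑ a, su2kRho k a = 0 := by
  simp only [su2kRho, ← sum_div]
  rw [Fin.sum_univ_eq_sum_range (fun i => 2 * (k : ℝ) - 2 * i - 1), sum_range_sub_odd]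
  push_cast
  ring

lemma su2kForm_su2kRho (x : Fin (2 * k) → ℝ) :
    su2kForm k x (su2kRho k) = ∑ a, x a * su2kRho k a := by
  simp [su2kForm, sum_su2kRho]

lemma su2kRho_pos {a : Fin (2 * k)} (ha : (a : ℕ) < k) : 0 < su2kRho k a := by
  have : ((a : ℕ) : ℝ) + 1 ≤ k := by exact_mod_cast ha
  simp only [su2kRho]
  linarith

lemma su2kRho_neg {a : Fin (2 * k)} (ha : k ≤ (a : ℕ)) : su2kRho k a < 0 := by
  have : (k : ℝ) ≤ (a : ℕ) := by exact_mod_cast ha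
  simp only [su2kRho]
  linarith

lemma su2kRho_ne_zero (a : Fin (2 * k)) : su2kRho k a ≠ 0 := by
  rcases lt_or_ge (a : ℕ) k with ha | ha
  · exact (su2kRho_pos ha).ne'
  · exact (su2kRho_neg ha).ne

lemma firstHalfIndicator_eq_zero_or_one (a : Fin (2 * k)) :
    firstHalfIndicator k a = 0 ∨ firstHalfIndicator k a = 1 := by
  unfold firstHalfIndicator
  split_ifs <;> simp

lemma sum_firstHalfIndicator : ∑ a, firstHalfIndicator k a = k := by
  simp [firstHalfIndicator, sum_fin_ite_lt (by omega : k ≤ 2 * k) (fun _ => 1)]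

lemma sum_firstHalfIndicator_mul_su2kRho :
    ∑ a, firstHalfIndicator k a * su2kRho k a = (k : ℝ) ^ 2 / 2 := by
  simp only [firstHalfIndicator, ite_mul, one_mul, zero_mul, su2kRho]
  rw [sum_fin_ite_lt (by omega) (fun i => (2 * (k : ℝ) - 2 * i - 1) / 2), ← sum_div,
    sum_range_sub_odd]
  ring

lemma mul_su2kRho_le {t s : ℝ} (ht : 0 ≤ t) (hts : t ≤ s) (a : Fin (2 * k)) :
    t * su2kRho k a ≤ s * firstHalfIndicator k a * su2kRho k a := by
  by_cases ha : (a : ℕ) < k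
  · simpa [firstHalfIndicator, ha] using mul_le_mul_of_nonneg_right hts (su2kRho_pos ha).le
  · simpa [firstHalfIndicator, ha] using
      mul_nonpos_of_nonneg_of_nonpos ht (su2kRho_neg (not_lt.mp ha)).le

variable {s : ℝ} {L : Fin (2 * k) → ℝ}

lemma sum_mul_su2kRho_le (hL : ∀ a, 0 ≤ L a ∧ L a ≤ s) :
    ∑ a, L a * su2kRho k a ≤ s * k ^ 2 / 2 := by
  calc ∑ a, L a * su2kRho k a ≤ ∑ a, s * firstHalfIndicator k a * su2kRho k a :=
        sum_le_sum fun a _ => mul_su2kRho_le (hL a).1 (hL a).2 a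
    _ = s * k ^ 2 / 2 := by
        simp only [mul_assoc, ← mul_sum, sum_firstHalfIndicator_mul_su2kRho]; ring

lemma sum_mul_su2kRho_eq_iff (hL : ∀ a, 0 ≤ L a ∧ L a ≤ s) :
    ∑ a, L a * su2kRho k a = s * k ^ 2 / 2 ↔ L = s • firstHalfIndicator k := by
  have hmax : ∑ a, s * firstHalfIndicator k a * su2kRho k a = s * k ^ 2 / 2 := by
    simp only [mul_assoc, ← mul_sum, sum_firstHalfIndicator_mul_su2kRho]; ring
  constructor
  · intro h
    rw [← hmax, sum_eq_sum_iff_of_le fun a _ => mul_su2kRho_le (hL a).1 (hL a).2 a] at h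
    funext a
    exact mul_right_cancel₀ (su2kRho_ne_zero a) (h a (mem_univ a))
  · rintro rfl
    simpa only [Pi.smul_apply, smul_eq_mul] using hmax

lemma su2kCasimir_eq (hS : ∑ a, L a = s * k) :
    su2kCasimir k L = ∑ a, L a ^ 2 + 2 * ∑ a, L a * su2kRho k a - s ^ 2 * k / 2 := by
  have hdiv : (s * k) * (s * k) / (2 * k) = s ^ 2 * k / 2 := by
    rcases eq_or_ne (k : ℝ) 0 with hk | hk
    · simp [hk]
    · field_simp
  rw [su2kCasimir, su2kForm_su2kRho, su2kForm, hS, hdiv]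
  simp only [sq]
  ring

theorem su2kCasimir_le (hL : ∀ a, 0 ≤ L a ∧ L a ≤ s) (hS : ∑ a, L a = s * k) :
    su2kCasimir k L ≤ s ^ 2 * k / 2 + s * k ^ 2 := by
  have hsq := sum_sq_le_mul_sum hL
  have hrho := sum_mul_su2kRho_le hL
  rw [su2kCasimir_eq hS]
  rw [hS] at hsq
  linarith

theorem su2kCasimir_eq_iff (hL : ∀ a, 0 ≤ L a ∧ L a ≤ s) (hS : ∑ a, L a = s * k) :
    su2kCasimir k L = s ^ 2 * k / 2 + s * k ^ 2 ↔
      L = s • firstHalfIndicator k := by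
  have hsq := sum_sq_le_mul_sum hL
  have hrho := sum_mul_su2kRho_le hL
  rw [su2kCasimir_eq hS, ← sum_mul_su2kRho_eq_iff hL]
  rw [hS] at hsq
  constructor
  · intro h
    linarith
  · intro h
    have hsq_eq : ∑ a, L a ^ 2 = s * (s * k) := by
      rw [← hS, mul_sum]
      refine sum_congr rfl fun a _ => ?_
      rw [(sum_mul_su2kRho_eq_iff hL).1 h]
      simp only [Pi.smul_apply, smul_eq_mul, firstHalfIndicator]
      split_ifs <;> ring
    linarith

end su2k

theorem stmt16_general {k n : ℕ}
    (w : Fin n → Fin (2 * k) → ℝ)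
    (hw01 : ∀ i a, w i a = 0 ∨ w i a = 1)
    (hwk : ∀ i, (∑ a, w i a) = (k : ℝ)) :
    su2kForm k (fun a => ∑ i, w i a) (fun a => ∑ i, w i a)
        + 2 * su2kForm k (fun a => ∑ i, w i a) (su2kRho k)
      ≤ (n : ℝ) ^ 2 * k / 2 + (n : ℝ) * (k : ℝ) ^ 2
    ∧ (su2kForm k (fun a => ∑ i, w i a) (fun a => ∑ i, w i a)
          + 2 * su2kForm k (fun a => ∑ i, w i a) (su2kRho k)
        = (n : ℝ) ^ 2 * k / 2 + (n : ℝ) * (k : ℝ) ^ 2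
      ↔ ∀ i a, w i a = if (a : ℕ) < k then 1 else 0) := by
  have hL : ∀ a, 0 ≤ ∑ i, w i a ∧ ∑ i, w i a ≤ n := by
    simpa using fun a => sum_nonneg_and_le_card_of_zero_or_one (hw01 · a)
  have hS : ∑ a, ∑ i, w i a = n * k := by
    rw [sum_comm]
    simp [hwk]
  have hground := sum_apply_eq_card_smul_iff_of_zero_or_one hw01 firstHalfIndicator_eq_zero_or_one
  rw [Fintype.card_fin] at hground
  exact ⟨su2kCasimir_le hL hS, (su2kCasimir_eq_iff hL hS).trans hground⟩

/-- Weight-maximization for the `su(2k)` weights at half filling.  Let `k, n ≥ 1` and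
let `w : Fin n → {0,1}^{2k}` with each `wᵢ` having exactly `k` coordinates equal to `1`.
With `Λ = Σᵢ wᵢ` and `F(w) = ⟨Λ, Λ⟩ + 2⟨Λ, ρ⟩`, we have `F(w) ≤ n²k/2 + nk²`, with
equality iff every `wᵢ` equals the vector `(1,…,1,0,…,0)` with `1` in the first `k`
coordinates and `0` in the last `k` coordinates. -/
theorem stmt16 {k n : ℕ} (hk : 1 ≤ k) (hn : 1 ≤ n)
    (w : Fin n → Fin (2 * k) → ℝ)
    (hw01 : ∀ i a, w i a = 0 ∨ w i a = 1)
    (hwk : ∀ i, (∑ a, w i a) = (k : ℝ)) :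
    su2kForm k (fun a => ∑ i, w i a) (fun a => ∑ i, w i a)
        + 2 * su2kForm k (fun a => ∑ i, w i a) (su2kRho k)
      ≤ (n : ℝ) ^ 2 * k / 2 + (n : ℝ) * (k : ℝ) ^ 2
    ∧ (su2kForm k (fun a => ∑ i, w i a) (fun a => ∑ i, w i a)
          + 2 * su2kForm k (fun a => ∑ i, w i a) (su2kRho k)
        = (n : ℝ) ^ 2 * k / 2 + (n : ℝ) * (k : ℝ) ^ 2
      ↔ ∀ i a, w i a = if (a : ℕ) < k then 1 else 0) :=
  stmt16_general w hw01 hwk
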